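/- Let β be continuous nonnegative on [0,∞) with ∫₀^∞ β = ∞ and β(a) = 0 for a ∈ [0,t₀]. Let p̄₀ ≥ 0 be integrable with support in [0,t₀] and ∫ p̄₀ > 0, and let p(t,a) = p̄₀(a-t)·exp(-∫₀^t β(a-s)ds). Define I_T(a) = C_T⁻¹ ∫₀^T β(a)p(t,a)dt with C_T = ∫₀^∞∫₀^T β(a)p(t,a)dt da, and I_∞(a) = β(a)·exp(-∫₀^a β(a')da'). Then ∫₀^∞ |I_T(a) - I_∞(a)| da → 0 as T → ∞. -/

import Mathlib

/-!
Because `β` vanishes on `(-∞, t₀]` and the initial cells all have age at most `t₀`, the survival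
factor `exp (-∫₀ᵗ β (a - s) ds)` of a cell of age `a` at time `t` equals `exp (-∫₀ᵃ β)` wherever
`p₀ (a - t) ≠ 0`. Hence the time integral of `β a * p t a` over `[0, T]` factorises as
`I∞ a * ∫_{a-T}^a p₀`, and the window integral tends to `∫ p₀` at every age where `I∞` is
nonzero. Both the numerator and the normalising constant `C_T` therefore converge by dominated
convergence (with dominating function a multiple of `I∞`, which has total mass `1` because
`∫₀^∞ β = ∞`), and a second application of dominated convergence gives the `L¹` convergence.
-/

open MeasureTheory Filter Set

theorem tendsto_integral_abs_inv_integral_mul_sub {α ι : Type*} [MeasurableSpace α]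
    {μ : Measure α} {l : Filter ι} [l.IsCountablyGenerated] [l.NeBot]
    {F : ι → α → ℝ} {f bound : α → ℝ}
    (hF_meas : ∀ᶠ i in l, AEStronglyMeasurable (F i) μ)
    (h_bound : ∀ᶠ i in l, ∀ᵐ a ∂μ, |F i a| ≤ bound a)
    (bound_integrable : Integrable bound μ)
    (h_lim : ∀ᵐ a ∂μ, Tendsto (fun i => F i a) l (nhds (f a)))
    (hf : ∫ a, f a ∂μ ≠ 0) :
    Tendsto (fun i => ∫ a, |(∫ x, F i x ∂μ)⁻¹ * F i a - (∫ x, f x ∂μ)⁻¹ * f a| ∂μ)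
      l (nhds 0) := by
  set c := ∫ x, f x ∂μ
  have hc_inv : Tendsto (fun i => (∫ x, F i x ∂μ)⁻¹) l (nhds c⁻¹) :=
    (tendsto_integral_filter_of_dominated_convergence bound hF_meas h_bound bound_integrable
      h_lim).inv₀ hf
  -- Along a sequence, countably many a.e. statements can be combined to pass to the limit `f`.
  obtain ⟨u, hu⟩ := exists_seq_tendsto l
  obtain ⟨N, hN⟩ := eventually_atTop.1 (hu.eventually (hF_meas.and h_bound))
  have hf_meas : AEStronglyMeasurable f μ :=
    aestronglyMeasurable_of_tendsto_ae atTop (fun n => (hN (n + N) le_add_self).1)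
      (h_lim.mono fun a ha => (ha.comp hu).comp (tendsto_add_atTop_nat N))
  have hf_bound : ∀ᵐ a ∂μ, |f a| ≤ bound a := by
    filter_upwards [h_lim, ae_all_iff.2 fun n => (hN (n + N) le_add_self).2] with a ha hb
    exact le_of_tendsto ((ha.comp hu).comp (tendsto_add_atTop_nat N)).abs
      (Eventually.of_forall hb)
  rw [← integral_zero α ℝ]
  refine tendsto_integral_filter_of_dominated_convergence (fun a => (2 * |c⁻¹| + 1) * bound a)
    ?_ ?_ (bound_integrable.const_mul _) ?_
  · filter_upwards [hF_meas] with i hi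
    exact ((hi.const_mul _).sub (hf_meas.const_mul _)).norm
  · filter_upwards [h_bound, hc_inv.abs.eventually (eventually_le_nhds (lt_add_one _))]
      with i hi hci
    filter_upwards [hi, hf_bound] with a ha hfa
    calc ‖|(∫ x, F i x ∂μ)⁻¹ * F i a - c⁻¹ * f a|‖
        ≤ |(∫ x, F i x ∂μ)⁻¹| * |F i a| + |c⁻¹| * |f a| := by
          rw [Real.norm_eq_abs, abs_abs, ← abs_mul, ← abs_mul]
          exact abs_sub _ _
      _ ≤ (|c⁻¹| + 1) * bound a + |c⁻¹| * bound a := by gcongr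
      _ = (2 * |c⁻¹| + 1) * bound a := by ring
  · filter_upwards [h_lim] with a ha
    simpa using ((hc_inv.mul ha).sub_const (c⁻¹ * f a)).abs
/-- `I∞`: the density of a lifetime with hazard rate `β`. -/
noncomputable def hazardDensity (β : ℝ → ℝ) (a : ℝ) : ℝ :=
  β a * Real.exp (-∫ x in (0:ℝ)..a, β x)

section Hazard

variable {β : ℝ → ℝ}

theorem continuous_hazardDensity (hβ : Continuous β) : Continuous (hazardDensity β) :=
  hβ.mul (Real.continuous_exp.comp (intervalIntegral.continuous_primitive
    (fun _ _ => hβ.intervalIntegrable _ _) 0).neg)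

theorem hazardDensity_nonneg (hβ : ∀ a, 0 ≤ β a) (a : ℝ) : 0 ≤ hazardDensity β a :=
  mul_nonneg (hβ a) (Real.exp_pos _).le

theorem hasDerivAt_neg_exp_neg_primitive (hβ : Continuous β) (a : ℝ) :
    HasDerivAt (fun u => -Real.exp (-∫ x in (0:ℝ)..u, β x)) (hazardDensity β a) a := by
  refine (((hβ.integral_hasStrictDerivAt 0 a).hasDerivAt.fun_neg).exp.fun_neg).congr_deriv ?_
  rw [hazardDensity]
  ring

theorem tendsto_neg_exp_neg_primitive
    (hβ : Tendsto (fun a => ∫ x in (0:ℝ)..a, β x) atTop atTop) :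
    Tendsto (fun u => -Real.exp (-∫ x in (0:ℝ)..u, β x)) atTop (nhds 0) := by
  simpa using (Real.tendsto_exp_atBot.comp (tendsto_neg_atBot_iff.2 hβ)).neg

theorem integrableOn_hazardDensity (hβc : Continuous β) (hβnn : ∀ a, 0 ≤ β a)
    (hβdiv : Tendsto (fun a => ∫ x in (0:ℝ)..a, β x) atTop atTop) :
    IntegrableOn (hazardDensity β) (Ioi 0) :=
  integrableOn_Ioi_deriv_of_nonneg' (fun a _ => hasDerivAt_neg_exp_neg_primitive hβc a)
    (fun a _ => hazardDensity_nonneg hβnn a) (tendsto_neg_exp_neg_primitive hβdiv)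

theorem integral_hazardDensity (hβc : Continuous β) (hβnn : ∀ a, 0 ≤ β a)
    (hβdiv : Tendsto (fun a => ∫ x in (0:ℝ)..a, β x) atTop atTop) :
    ∫ a in Ioi 0, hazardDensity β a = 1 := by
  rw [integral_Ioi_of_hasDerivAt_of_nonneg' (fun a _ => hasDerivAt_neg_exp_neg_primitive hβc a)
    (fun a _ => hazardDensity_nonneg hβnn a) (tendsto_neg_exp_neg_primitive hβdiv)]
  simp

end Hazard

theorem integral_comp_sub_eq_primitive_of_eqOn_zero {β : ℝ → ℝ} (hβ : Continuous β) {a t : ℝ}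
    (h : ∀ x ∈ uIcc 0 (a - t), β x = 0) :
    ∫ s in (0:ℝ)..t, β (a - s) = ∫ x in (0:ℝ)..a, β x := by
  rw [intervalIntegral.integral_comp_sub_left β a, sub_zero,
    ← intervalIntegral.integral_add_adjacent_intervals (a := 0) (b := a - t) (c := a)
      (hβ.intervalIntegrable _ _) (hβ.intervalIntegrable _ _),
    intervalIntegral.integral_congr h, intervalIntegral.integral_zero, zero_add]

theorem integral_mul_transport_eq_hazardDensity_mul {β p0 : ℝ → ℝ} {t0 : ℝ} (hβ : Continuous β)
    (hβ0 : ∀ a, a ≤ t0 → β a = 0) (hp0 : ∀ a, a < 0 ∨ t0 < a → p0 a = 0) (T a : ℝ) :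
    ∫ t in (0:ℝ)..T, β a * (p0 (a - t) * Real.exp (-∫ s in (0:ℝ)..t, β (a - s)))
      = hazardDensity β a * ∫ x in (a - T)..a, p0 x := by
  have hage : ∀ t, β a * (p0 (a - t) * Real.exp (-∫ s in (0:ℝ)..t, β (a - s)))
      = hazardDensity β a * p0 (a - t) := by
    intro t
    by_cases hsupp : a - t < 0 ∨ t0 < a - t
    · simp [hp0 _ hsupp]
    push Not at hsupp
    rw [integral_comp_sub_eq_primitive_of_eqOn_zero hβ fun x hx =>
      hβ0 x ((uIcc_of_le hsupp.1 ▸ hx).2.trans hsupp.2), hazardDensity]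
    ring
  rw [intervalIntegral.integral_congr fun t _ => hage t, intervalIntegral.integral_const_mul,
    intervalIntegral.integral_comp_sub_left p0 a, sub_zero]

theorem continuous_integral_sub_self {f : ℝ → ℝ} (hf : Integrable f) (T : ℝ) :
    Continuous fun a => ∫ x in (a - T)..a, f x := by
  have hP := intervalIntegral.continuous_primitive (fun _ _ => hf.intervalIntegrable) 0
  have hsub : ∀ a, ∫ x in (a - T)..a, f x
      = (∫ x in (0:ℝ)..a, f x) - ∫ x in (0:ℝ)..(a - T), f x := fun a =>
    (intervalIntegral.integral_interval_sub_left hf.intervalIntegrable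
      hf.intervalIntegrable).symm
  simp_rw [hsub]
  exact hP.sub (hP.comp (continuous_sub_right T))

theorem integral_sub_self_nonneg {f : ℝ → ℝ} (hf : ∀ x, 0 ≤ f x) {T : ℝ} (hT : 0 ≤ T) (a : ℝ) :
    0 ≤ ∫ x in (a - T)..a, f x :=
  intervalIntegral.integral_nonneg (by linarith) fun x _ => hf x

theorem integral_sub_self_le_integral {f : ℝ → ℝ} (hf : Integrable f) (hf0 : ∀ x, 0 ≤ f x) {T : ℝ}
    (hT : 0 ≤ T) (a : ℝ) : ∫ x in (a - T)..a, f x ≤ ∫ x, f x := by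
  rw [intervalIntegral.integral_of_le (by linarith)]
  exact setIntegral_le_integral hf (Eventually.of_forall hf0)

theorem tendsto_integral_sub_self {f : ℝ → ℝ} (hf : Integrable f) (a : ℝ) :
    Tendsto (fun T => ∫ x in (a - T)..a, f x) atTop (nhds (∫ x in Iic a, f x)) :=
  intervalIntegral_tendsto_integral_Iic a hf.integrableOn
    (tendsto_atBot_add_const_left _ a tendsto_neg_atTop_atBot)

theorem imt_distribution_L1_convergence_general
    (β p0 : ℝ → ℝ) (t0 : ℝ)
    (hβc : Continuous β) (hβnn : ∀ a, 0 ≤ β a)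
    (hβdiv : Tendsto (fun a => ∫ x in (0:ℝ)..a, β x) atTop atTop)
    (hβ0 : ∀ a, a ≤ t0 → β a = 0)
    (hp0int : Integrable p0) (hp0nn : ∀ a, 0 ≤ p0 a)
    (hp0supp : ∀ a, a < 0 ∨ t0 < a → p0 a = 0)
    (hp0pos : 0 < ∫ a in Set.Ioi (0:ℝ), p0 a)
    (p : ℝ → ℝ → ℝ)
    (hp : ∀ t a, p t a = p0 (a - t) * Real.exp (-∫ s in (0:ℝ)..t, β (a - s))) :
    Tendsto (fun T => ∫ a in Set.Ioi (0:ℝ),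
        |(∫ x in Set.Ioi (0:ℝ), ∫ t in (0:ℝ)..T, β x * p t x)⁻¹ *
            (∫ t in (0:ℝ)..T, β a * p t a)
          - β a * Real.exp (-∫ x in (0:ℝ)..a, β x)|)
      atTop (nhds 0) := by
  simp only [hp, integral_mul_transport_eq_hazardDensity_mul hβc hβ0 hp0supp]
  set M := ∫ x, p0 x
  have hM : ∫ a in Ioi 0, p0 a = M := by
    rw [← integral_Ici_eq_integral_Ioi]
    exact setIntegral_eq_integral_of_forall_compl_eq_zero fun x hx =>
      hp0supp x (Or.inl (not_le.1 hx))
  have hMpos : 0 < M := hM ▸ hp0pos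
  have hbound : ∀ T, 0 ≤ T → ∀ a, |hazardDensity β a * ∫ x in (a - T)..a, p0 x|
      ≤ M * hazardDensity β a := by
    intro T hT a
    have hI := hazardDensity_nonneg hβnn a
    rw [abs_of_nonneg (mul_nonneg hI (integral_sub_self_nonneg hp0nn hT a)), mul_comm M]
    exact mul_le_mul_of_nonneg_left (integral_sub_self_le_integral hp0int hp0nn hT a) hI
  have hlim : ∀ a, Tendsto (fun T => hazardDensity β a * ∫ x in (a - T)..a, p0 x) atTop
      (nhds (M * hazardDensity β a)) := by
    intro a
    convert (tendsto_integral_sub_self hp0int a).const_mul (hazardDensity β a) using 2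
    rw [mul_comm]
    rcases le_or_gt a t0 with ha | ha
    · simp [hazardDensity, hβ0 a ha]
    · rw [setIntegral_eq_integral_of_forall_compl_eq_zero (s := Iic a) fun x hx =>
        hp0supp x (Or.inr (ha.trans (not_le.1 hx)))]
  have hL1 := tendsto_integral_abs_inv_integral_mul_sub (μ := volume.restrict (Ioi 0))
    (F := fun T a => hazardDensity β a * ∫ x in (a - T)..a, p0 x)
    (Eventually.of_forall fun T => ((continuous_hazardDensity hβc).mul
      (continuous_integral_sub_self hp0int T)).aestronglyMeasurable)
    ((eventually_ge_atTop 0).mono fun T hT => ae_of_all _ (hbound T hT))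
    ((integrableOn_hazardDensity hβc hβnn hβdiv).const_mul M) (ae_of_all _ hlim)
    (by rw [integral_const_mul, integral_hazardDensity hβc hβnn hβdiv]; positivity)
  simp only [integral_const_mul, integral_hazardDensity hβc hβnn hβdiv, mul_one,
    inv_mul_cancel_left₀ hMpos.ne'] at hL1
  exact hL1

theorem imt_distribution_L1_convergence
    (β p0 : ℝ → ℝ) (t0 : ℝ) (ht0 : 0 < t0)
    (hβc : Continuous β) (hβnn : ∀ a, 0 ≤ β a)
    (hβdiv : Tendsto (fun a => ∫ x in (0:ℝ)..a, β x) atTop atTop)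
    (hβ0 : ∀ a, a ≤ t0 → β a = 0)
    (hp0int : Integrable p0) (hp0nn : ∀ a, 0 ≤ p0 a)
    (hp0supp : ∀ a, a < 0 ∨ t0 < a → p0 a = 0)
    (hp0pos : 0 < ∫ a in Set.Ioi (0:ℝ), p0 a)
    (p : ℝ → ℝ → ℝ)
    (hp : ∀ t a, p t a = p0 (a - t) * Real.exp (-∫ s in (0:ℝ)..t, β (a - s))) :
    Tendsto (fun T => ∫ a in Set.Ioi (0:ℝ),
        |(∫ x in Set.Ioi (0:ℝ), ∫ t in (0:ℝ)..T, β x * p t x)⁻¹ *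
            (∫ t in (0:ℝ)..T, β a * p t a)
          - β a * Real.exp (-∫ x in (0:ℝ)..a, β x)|)
      atTop (nhds 0) :=
  imt_distribution_L1_convergence_general β p0 t0 hβc hβnn hβdiv hβ0 hp0int hp0nn hp0supp hp0pos p
    hp
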